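/- The *-limit estimator γ~ = B_{k,P-1}(φ_•)/B_{k,P}(φ_•) has expectation E*(γ~) = γ(1 - (φ_1 γ)^k / σ_k(γ)) < γ under the distribution P*(P_k = p) = γ^p B_{k,p}(φ_•)/σ_k(γ); in particular γ~ is a negatively biased estimator of γ. -/

import Mathlib

/-!
Cancelling `B_{k,p}` in each term leaves `E*(γ~) = Σ_{p=1}^k γ^p B_{k,p-1} / σ_k(γ)`.
After the shift `p ↦ p - 1` the numerator is `γ Σ_{l=0}^{k-1} γ^l B_{k,l}`, which is `γ`
times `σ_k(γ)` without its top term `γ^k B_{k,k} = (φ_1 γ)^k`. That missing term is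
positive, hence the negative bias.
-/

open Finset

/-- The local exponential generating function `φ(x) = Σ_{m≥1} (φ_m/m!) x^m`
as a formal power series. -/
noncomputable def phiPS (φ : ℕ → ℝ) : PowerSeries ℝ :=
  PowerSeries.mk fun m => if m = 0 then 0 else φ m / m.factorial

/-- `σ_k(θ) := k! [x^k] exp(θ φ(x))`, where the coefficient of the composed
exponential is computed termwise (φ has zero constant term, so only `l ≤ k`
contribute). -/
noncomputable def sigmaP (φ : ℕ → ℝ) (k : ℕ) (θ : ℝ) : ℝ :=
  (k.factorial : ℝ) *
    ∑ l ∈ Finset.range (k + 1),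
      θ ^ l / l.factorial * PowerSeries.coeff (R := ℝ) k (phiPS φ ^ l)

/-- The Bell exponential polynomial `B_{k,l}(φ_•) = (k!/l!) [x^k] φ(x)^l`. -/
noncomputable def BellB (φ : ℕ → ℝ) (k l : ℕ) : ℝ :=
  ((k.factorial : ℝ) / l.factorial) * PowerSeries.coeff (R := ℝ) k (phiPS φ ^ l)

-- `φ = X g` with `g(0) = φ_1`, so `[x^n] φ^n = [x^0] g^n = φ_1^n`.
lemma coeff_phiPS_pow_self (φ : ℕ → ℝ) (n : ℕ) :
    PowerSeries.coeff n (phiPS φ ^ n) = φ 1 ^ n := by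
  obtain ⟨g, hg⟩ : PowerSeries.X ∣ phiPS φ :=
    PowerSeries.X_dvd_iff.2 (by simp [phiPS])
  have hg0 : PowerSeries.constantCoeff g = φ 1 := by
    rw [← PowerSeries.coeff_zero_eq_constantCoeff_apply, ← PowerSeries.coeff_succ_X_mul, ← hg]
    simp [phiPS]
  rw [hg, mul_pow, PowerSeries.coeff_X_pow_mul', if_pos le_rfl, Nat.sub_self,
    PowerSeries.coeff_zero_eq_constantCoeff_apply, map_pow, hg0]

lemma BellB_zero (φ : ℕ → ℝ) {k : ℕ} (hk : k ≠ 0) : BellB φ k 0 = 0 := by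
  rw [BellB, pow_zero, PowerSeries.coeff_one, if_neg hk, mul_zero]

lemma BellB_self (φ : ℕ → ℝ) (k : ℕ) : BellB φ k k = φ 1 ^ k := by
  rw [BellB, coeff_phiPS_pow_self, div_self (by exact_mod_cast k.factorial_ne_zero), one_mul]

lemma sigmaP_eq_sum_BellB (φ : ℕ → ℝ) (k : ℕ) (θ : ℝ) :
    sigmaP φ k θ = ∑ l ∈ range (k + 1), θ ^ l * BellB φ k l := by
  rw [sigmaP, mul_sum]
  refine sum_congr rfl fun l _ => ?_
  rw [BellB]
  ring

lemma sigmaP_pos (φ : ℕ → ℝ) {k : ℕ} (hk : 1 ≤ k) {θ : ℝ} (hθ : 0 < θ)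
    (hB : ∀ p, 1 ≤ p → p ≤ k → 0 < BellB φ k p) : 0 < sigmaP φ k θ := by
  rw [sigmaP_eq_sum_BellB, sum_range_succ', BellB_zero φ (by omega), mul_zero, add_zero]
  refine sum_pos (fun i hi => mul_pos (pow_pos hθ _) (hB _ (by omega) ?_))
    (nonempty_range_iff.2 (by omega))
  have := mem_range.1 hi
  omega

lemma sum_pow_mul_BellB_pred (φ : ℕ → ℝ) (k : ℕ) (θ : ℝ) :
    ∑ p ∈ Icc 1 k, θ ^ p * BellB φ k (p - 1) = θ * (sigmaP φ k θ - (φ 1 * θ) ^ k) := by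
  rw [sigmaP_eq_sum_BellB, sum_range_succ, BellB_self, mul_pow, mul_comm (φ 1 ^ k),
    add_sub_cancel_right, mul_sum, ← Ico_add_one_right_eq_Icc, sum_Ico_eq_sum_range,
    Nat.add_sub_cancel]
  refine sum_congr rfl fun l _ => ?_
  rw [add_tsub_cancel_left, pow_add, pow_one, mul_assoc]

lemma sum_BellB_ratio_mul_weight (φ : ℕ → ℝ) (k : ℕ) {θ : ℝ}
    (hσ : sigmaP φ k θ ≠ 0)
    (hB : ∀ p, 1 ≤ p → p ≤ k → BellB φ k p ≠ 0) :
    ∑ p ∈ Icc 1 k,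
        (BellB φ k (p - 1) / BellB φ k p) * (θ ^ p * BellB φ k p / sigmaP φ k θ) =
      θ * (1 - (φ 1 * θ) ^ k / sigmaP φ k θ) := by
  have hcancel : ∀ p ∈ Icc 1 k,
      (BellB φ k (p - 1) / BellB φ k p) * (θ ^ p * BellB φ k p / sigmaP φ k θ) =
        θ ^ p * BellB φ k (p - 1) / sigmaP φ k θ := by
    intro p hp
    have := hB p (mem_Icc.1 hp).1 (mem_Icc.1 hp).2
    field_simp
  rw [sum_congr rfl hcancel, ← sum_div, sum_pow_mul_BellB_pred]
  field_simp

theorem stmt15_general (φ : ℕ → ℝ) (hφ1 : 0 < φ 1)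
    (γ : ℝ) (hγ : 0 < γ) (k : ℕ) (hk : 1 ≤ k)
    (hB : ∀ p, 1 ≤ p → p ≤ k → 0 < BellB φ k p) :
    ∑ p ∈ Finset.Icc 1 k,
        (BellB φ k (p - 1) / BellB φ k p) * (γ ^ p * BellB φ k p / sigmaP φ k γ) =
      γ * (1 - (φ 1 * γ) ^ k / sigmaP φ k γ) ∧
    ∑ p ∈ Finset.Icc 1 k,
        (BellB φ k (p - 1) / BellB φ k p) * (γ ^ p * BellB φ k p / sigmaP φ k γ) < γ := by
  have hσ := sigmaP_pos φ hk hγ hB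
  have hmean := sum_BellB_ratio_mul_weight φ k hσ.ne' fun p h1 h2 => (hB p h1 h2).ne'
  refine ⟨hmean, hmean ▸ mul_lt_of_lt_one_right hγ (sub_lt_self 1 ?_)⟩
  exact div_pos (pow_pos (mul_pos hφ1 hγ) k) hσ

theorem stmt15 (φ : ℕ → ℝ) (hφ1 : 0 < φ 1) (hφ : ∀ m, 0 ≤ φ m)
    (γ : ℝ) (hγ : 0 < γ) (k : ℕ) (hk : 1 ≤ k)
    (hB : ∀ p, 1 ≤ p → p ≤ k → 0 < BellB φ k p) :
    ∑ p ∈ Finset.Icc 1 k,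
        (BellB φ k (p - 1) / BellB φ k p) * (γ ^ p * BellB φ k p / sigmaP φ k γ) =
      γ * (1 - (φ 1 * γ) ^ k / sigmaP φ k γ) ∧
    ∑ p ∈ Finset.Icc 1 k,
        (BellB φ k (p - 1) / BellB φ k p) * (γ ^ p * BellB φ k p / sigmaP φ k γ) < γ :=
  stmt15_general φ hφ1 γ hγ k hk hB
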